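/- arXiv:math/0202228 — 2 statements merged into one kernel-verified Lean document; each statement's English description precedes it below -/
import Mathlib

section
/- Let M be a Garside monoid with Garside element Δ and simple divisors D, and let G be its group of fractions. Suppose Δ is tame. Then the translation lengths of nontrivial elements of G are bounded away from zero: there exists ε > 0 such that for every g ∈ G with g ≠ 1, liminf_{n→∞} |gⁿ|_D / n ≥ ε (in particular the translation length τ(g) = lim_{n→∞} |gⁿ|_D / n, whenever it exists, is at least ε). -/
namespace Garside

variable {M : Type*} [Monoid M]

/-- `a` left-divides `b`. -/
def LDvd (a b : M) : Prop := ∃ c, b = a * c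

/-- `a` right-divides `b`. -/
def RDvd (a b : M) : Prop := ∃ c, b = c * a

/-- `m` is indivisible (an atom). -/
def Indec (m : M) : Prop := m ≠ 1 ∧ ∀ a b : M, m = a * b → a = 1 ∨ b = 1

/-- The set of lengths of expressions of `m` as a product of atoms. -/
def exprLengths (m : M) : Set ℕ :=
  {n | ∃ l : List M, (∀ x ∈ l, Indec x) ∧ l.prod = m ∧ l.length = n}

/-- The norm `‖m‖`: supremum of lengths of expressions of `m` as products of atoms. -/
noncomputable def norm (m : M) : ℕ := sSup (exprLengths m)

/-- `M` is a Garside monoid with Garside element `Δ`. -/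
structure IsGarside (M : Type*) [Monoid M] (Δ : M) : Prop where
  /- atomicity: every element is a product of atoms, with bounded expression lengths -/
  expr_nonempty : ∀ m : M, (exprLengths m).Nonempty
  expr_bdd : ∀ m : M, BddAbove (exprLengths m)
  mul_left_cancel : ∀ a b c : M, a * b = a * c → b = c
  mul_right_cancel : ∀ a b c : M, b * a = c * a → b = c
  exists_lgcd : ∀ a b : M, ∃ d, LDvd d a ∧ LDvd d b ∧ ∀ e, LDvd e a → LDvd e b → LDvd e d
  exists_llcm : ∀ a b : M, ∃ l, LDvd a l ∧ LDvd b l ∧ ∀ e, LDvd a e → LDvd b e → LDvd l e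
  exists_rgcd : ∀ a b : M, ∃ d, RDvd d a ∧ RDvd d b ∧ ∀ e, RDvd e a → RDvd e b → RDvd e d
  exists_rlcm : ∀ a b : M, ∃ l, RDvd a l ∧ RDvd b l ∧ ∀ e, RDvd a e → RDvd b e → RDvd l e
  divisor_iff : ∀ x : M, LDvd x Δ ↔ RDvd x Δ
  divisors_finite : {x : M | LDvd x Δ}.Finite
  generates : Submonoid.closure {x : M | LDvd x Δ} = ⊤

/-- The set of simple divisors of the Garside element. -/
def SimpleDivs (Δ : M) : Set M := {x : M | LDvd x Δ}

/-- `G`, with an injective monoid homomorphism `ι : M →* G`, is the group of fractions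
of the monoid `M`. -/
structure IsGroupOfFractions (M G : Type*) [Monoid M] [Group G] (ι : M →* G) : Prop where
  injective : Function.Injective ι
  fraction : ∀ g : G, ∃ a b : M, g = ι a * (ι b)⁻¹

end Garside

namespace Garside

/-- Word length of `g` with respect to a generating set `S`: the least `n` such that
`g` is a product of `n` elements of `S ∪ S⁻¹`. -/
noncomputable def wordLength {G : Type*} [Group G] (S : Set G) (g : G) : ℕ :=
  sInf {n | ∃ l : List G, (∀ x ∈ l, x ∈ S ∨ x⁻¹ ∈ S) ∧ l.prod = g ∧ l.length = n}

end Garside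

/-!
Left divisibility extends to a left-invariant partial order `≼` on `G` (`x ≼ y` iff `x⁻¹ y` is
positive) in which `1` and any `x` have a join, intervals are finite, and a word of length `n` in
the simple elements and their inverses lies below `Δⁿ`.

Suppose `2 c |gⁿ| < n`, where `‖Δᵏ‖ ≤ c k`. The joins `Jₖ = 1 ∨ g ∨ ⋯ ∨ gᵏ` are positive and
increase with `k`; a chain from `1` with `k` strict steps ends at an element of norm at least `k`.
But for suitable `k` all of `1, …, gᵏ` lie below `Δˢ` with `‖Δˢ‖ ≤ c s < k`, so the chain stalls
at some step, and `Jₖ₊₁ = 1 ∨ g Jₖ` is then constant from there on: the powers of `g` are bounded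
above. Applied to `g⁻¹` this bounds them below as well, so they lie in a finite interval and `g`
has finite order. Finally a Garside group is torsion free: if `gᵏ = 1`, the join `J` of
`1, …, gᵏ⁻¹` satisfies `g J = J`.
-/

namespace Garside

theorem LDvd.trans {M : Type*} [Monoid M] {a b c : M} (hab : LDvd a b) (hbc : LDvd b c) :
    LDvd a c := by
  obtain ⟨x, rfl⟩ := hab
  obtain ⟨y, rfl⟩ := hbc
  exact ⟨x * y, mul_assoc a x y⟩

theorem ldvd_pow_of_le {M : Type*} [Monoid M] (a : M) {m n : ℕ} (h : m ≤ n) :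
    LDvd (a ^ m) (a ^ n) :=
  ⟨a ^ (n - m), by rw [← pow_add, Nat.add_sub_cancel' h]⟩

namespace IsGarside

variable {M : Type*} [Monoid M] {Δ : M}

theorem norm_add_norm_le (hG : IsGarside M Δ) (a b : M) : norm a + norm b ≤ norm (a * b) := by
  obtain ⟨la, hla, hpa, hlena⟩ := Nat.sSup_mem (hG.expr_nonempty a) (hG.expr_bdd a)
  obtain ⟨lb, hlb, hpb, hlenb⟩ := Nat.sSup_mem (hG.expr_nonempty b) (hG.expr_bdd b)
  refine le_csSup (hG.expr_bdd _) ⟨la ++ lb, ?_, by rw [List.prod_append, hpa, hpb], ?_⟩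
  · simpa only [List.mem_append] using fun x hx => hx.elim (hla x) (hlb x)
  · rw [List.length_append, hlena, hlenb]
    rfl

theorem norm_pos (hG : IsGarside M Δ) {a : M} (ha : a ≠ 1) : 0 < norm a := by
  obtain ⟨n, l, hl, rfl, rfl⟩ := hG.expr_nonempty a
  refine lt_of_lt_of_le ?_ (le_csSup (hG.expr_bdd _) ⟨l, hl, rfl, rfl⟩)
  exact List.length_pos_iff.mpr fun hnil => ha (by rw [hnil, List.prod_nil])

theorem eq_one_of_mul_eq_one (hG : IsGarside M Δ) {a b : M} (hab : a * b = 1) : a = 1 := by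
  have hone : norm (1 : M) = 0 := by
    have := hG.norm_add_norm_le 1 1
    rw [mul_one] at this
    omega
  by_contra ha
  have := hG.norm_add_norm_le a b
  rw [hab, hone] at this
  have := hG.norm_pos ha
  omega

theorem norm_le_norm_of_ldvd (hG : IsGarside M Δ) {a b : M} (h : LDvd a b) :
    norm a ≤ norm b := by
  obtain ⟨c, rfl⟩ := h
  exact (Nat.le_add_right _ _).trans (hG.norm_add_norm_le a c)

theorem mem_simpleDivs_of_indec (hG : IsGarside M Δ) {a : M} (ha : Indec a) :
    a ∈ SimpleDivs Δ := by
  have hmem : a ∈ Submonoid.closure (SimpleDivs Δ) := hG.generates ▸ Submonoid.mem_top a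
  obtain ⟨l, hl, rfl⟩ := Submonoid.exists_list_of_mem_closure hmem
  clear hmem
  induction l with
  | nil => exact absurd rfl ha.1
  | cons d t ih =>
    simp only [List.mem_cons, forall_eq_or_imp] at hl
    rw [List.prod_cons] at ha ⊢
    rcases ha.2 d t.prod rfl with rfl | ht
    · rw [one_mul] at ha ⊢
      exact ih hl.2 ha
    · rw [ht, mul_one]
      exact hl.1

theorem exists_list_simpleDivs (hG : IsGarside M Δ) (m : M) :
    ∃ l : List M, (∀ x ∈ l, x ∈ SimpleDivs Δ) ∧ l.prod = m ∧ l.length ≤ norm m := by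
  obtain ⟨n, l, hl, hp, rfl⟩ := hG.expr_nonempty m
  exact ⟨l, fun x hx => hG.mem_simpleDivs_of_indec (hl x hx), hp,
    le_csSup (hG.expr_bdd m) ⟨l, hl, hp, rfl⟩⟩

theorem finite_setOf_ldvd (hG : IsGarside M Δ) (w : M) : {x : M | LDvd x w}.Finite := by
  have : Finite (SimpleDivs Δ) := hG.divisors_finite
  refine ((List.finite_length_le (SimpleDivs Δ) (norm w)).image
    fun l => (l.map Subtype.val).prod).subset fun x hx => ?_
  obtain ⟨l, hl, rfl, hlen⟩ := hG.exists_list_simpleDivs x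
  lift l to List (SimpleDivs Δ) using hl
  exact ⟨l, (List.length_map _ ▸ hlen).trans (hG.norm_le_norm_of_ldvd hx), rfl⟩

theorem exists_mul_delta_eq (hG : IsGarside M Δ) (m : M) : ∃ m', m * Δ = Δ * m' := by
  have hm : m ∈ Submonoid.closure (SimpleDivs Δ) := hG.generates ▸ Submonoid.mem_top m
  induction hm using Submonoid.closure_induction with
  | mem s hs =>
    obtain ⟨t, ht⟩ := hs
    obtain ⟨t', ht'⟩ := (hG.divisor_iff t).mpr ⟨s, ht⟩
    refine ⟨t', ?_⟩
    calc s * Δ = s * t * t' := by rw [mul_assoc, ← ht']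
      _ = Δ * t' := by rw [← ht]
  | one => exact ⟨1, by rw [one_mul, mul_one]⟩
  | mul x y _ _ hx hy =>
    obtain ⟨x', hx'⟩ := hx
    obtain ⟨y', hy'⟩ := hy
    exact ⟨x' * y', by rw [mul_assoc, hy', ← mul_assoc, hx', mul_assoc]⟩

theorem exists_delta_mul_eq (hG : IsGarside M Δ) (m : M) : ∃ m', Δ * m = m' * Δ := by
  have hm : m ∈ Submonoid.closure (SimpleDivs Δ) := hG.generates ▸ Submonoid.mem_top m
  induction hm using Submonoid.closure_induction with
  | mem s hs =>
    obtain ⟨u, hu⟩ := (hG.divisor_iff s).mp hs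
    obtain ⟨u', hu'⟩ := (hG.divisor_iff u).mp ⟨s, hu⟩
    refine ⟨u', ?_⟩
    calc Δ * s = u' * (u * s) := by rw [← mul_assoc, ← hu']
      _ = u' * Δ := by rw [← hu]
  | one => exact ⟨1, by rw [one_mul, mul_one]⟩
  | mul x y _ _ hx hy =>
    obtain ⟨x', hx'⟩ := hx
    obtain ⟨y', hy'⟩ := hy
    exact ⟨x' * y', by rw [← mul_assoc, hx', mul_assoc, hy', mul_assoc]⟩

theorem exists_mul_delta_pow_eq (hG : IsGarside M Δ) (m : M) (K : ℕ) :
    ∃ m', m * Δ ^ K = Δ ^ K * m' := by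
  induction K generalizing m with
  | zero => exact ⟨m, by rw [pow_zero, one_mul, mul_one]⟩
  | succ K ih =>
    obtain ⟨m₁, h₁⟩ := ih m
    obtain ⟨m₂, h₂⟩ := hG.exists_mul_delta_eq m₁
    exact ⟨m₂, by rw [pow_succ, ← mul_assoc, h₁, mul_assoc, h₂, ← mul_assoc]⟩

theorem exists_delta_pow_mul_eq (hG : IsGarside M Δ) (m : M) (K : ℕ) :
    ∃ m', Δ ^ K * m = m' * Δ ^ K := by
  induction K generalizing m with
  | zero => exact ⟨m, by rw [pow_zero, one_mul, mul_one]⟩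
  | succ K ih =>
    obtain ⟨m₁, h₁⟩ := ih m
    obtain ⟨m₂, h₂⟩ := hG.exists_delta_mul_eq m₁
    exact ⟨m₂, by rw [pow_succ', mul_assoc, h₁, ← mul_assoc, h₂, mul_assoc]⟩

theorem ldvd_pow_norm (hG : IsGarside M Δ) (m : M) : LDvd m (Δ ^ norm m) := by
  obtain ⟨l, hl, rfl, hlen⟩ := hG.exists_list_simpleDivs m
  refine LDvd.trans ?_ (ldvd_pow_of_le Δ hlen)
  clear hlen
  induction l with
  | nil => exact ⟨1, by rw [List.length_nil, pow_zero, List.prod_nil, mul_one]⟩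
  | cons s t ih =>
    simp only [List.mem_cons, forall_eq_or_imp] at hl
    obtain ⟨⟨u, hu⟩, hl⟩ := hl
    obtain ⟨r, hr⟩ := ih hl
    obtain ⟨u', hu'⟩ := hG.exists_mul_delta_pow_eq u t.length
    refine ⟨r * u', ?_⟩
    calc Δ ^ (t.length + 1) = s * (u * Δ ^ t.length) := by rw [pow_succ', hu, mul_assoc]
      _ = s * t.prod * (r * u') := by rw [hu', hr, mul_assoc, mul_assoc]

end IsGarside

section WordLength

variable {G : Type*} [Group G] {S : Set G}

theorem exists_word_of_closure_eq_top (hS : Subgroup.closure S = ⊤) (g : G) :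
    ∃ l : List G, (∀ x ∈ l, x ∈ S ∨ x⁻¹ ∈ S) ∧ l.prod = g := by
  have hg : g ∈ (Subgroup.closure S).toSubmonoid := hS ▸ Subgroup.mem_top g
  rw [Subgroup.closure_toSubmonoid] at hg
  simpa only [Set.mem_union, Set.mem_inv] using Submonoid.exists_list_of_mem_closure hg

theorem exists_word_length_eq_wordLength (hS : Subgroup.closure S = ⊤) (g : G) :
    ∃ l : List G, (∀ x ∈ l, x ∈ S ∨ x⁻¹ ∈ S) ∧ l.prod = g ∧ l.length = wordLength S g := by
  obtain ⟨l, hl, hp⟩ := exists_word_of_closure_eq_top hS g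
  exact Nat.sInf_mem (s := {n | ∃ l : List G, (∀ x ∈ l, x ∈ S ∨ x⁻¹ ∈ S) ∧ l.prod = g ∧
    l.length = n}) ⟨l.length, l, hl, hp, rfl⟩

theorem wordLength_le_length {g : G} {l : List G} (hl : ∀ x ∈ l, x ∈ S ∨ x⁻¹ ∈ S)
    (hp : l.prod = g) : wordLength S g ≤ l.length :=
  Nat.sInf_le ⟨l, hl, hp, rfl⟩

theorem wordLength_one : wordLength S (1 : G) = 0 :=
  Nat.le_zero.mp (wordLength_le_length (l := []) (by simp) rfl)

theorem wordLength_mul_le (hS : Subgroup.closure S = ⊤) (g h : G) :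
    wordLength S (g * h) ≤ wordLength S g + wordLength S h := by
  obtain ⟨l, hl, rfl, hlen⟩ := exists_word_length_eq_wordLength hS g
  obtain ⟨l', hl', rfl, hlen'⟩ := exists_word_length_eq_wordLength hS h
  rw [← hlen, ← hlen', ← List.length_append]
  refine wordLength_le_length (fun x hx => ?_) List.prod_append
  exact (List.mem_append.mp hx).elim (hl x) (hl' x)

theorem wordLength_pow_le (hS : Subgroup.closure S = ⊤) (g : G) (n : ℕ) :
    wordLength S (g ^ n) ≤ n * wordLength S g := by
  induction n with
  | zero => rw [pow_zero, wordLength_one, Nat.zero_mul]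
  | succ n ih =>
    rw [pow_succ, Nat.succ_mul]
    exact (wordLength_mul_le hS _ _).trans (Nat.add_le_add_right ih _)

theorem wordLength_inv_le (hS : Subgroup.closure S = ⊤) (g : G) :
    wordLength S g⁻¹ ≤ wordLength S g := by
  obtain ⟨l, hl, rfl, hlen⟩ := exists_word_length_eq_wordLength hS g
  rw [← hlen, ← List.length_map (f := fun x => x⁻¹), ← List.length_reverse]
  refine wordLength_le_length (fun x hx => ?_) (List.prod_inv_reverse l).symm
  obtain ⟨y, hy, rfl⟩ := List.mem_map.mp (List.mem_reverse.mp hx)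
  rw [inv_inv]
  exact (hl y hy).symm

/-- Writing `i = q' n + r` with `q' ≤ q` and `r < n` splits `g ^ i` into short pieces. -/
theorem wordLength_pow_le_of_le_mul (hS : Subgroup.closure S = ⊤) (g : G) {i q n : ℕ}
    (hi : i ≤ q * n) : wordLength S (g ^ i) ≤ q * wordLength S (g ^ n) + n * wordLength S g := by
  rcases Nat.eq_zero_or_pos n with rfl | hn
  · rw [Nat.mul_zero, Nat.le_zero] at hi
    rw [hi, pow_zero, wordLength_one]
    exact Nat.zero_le _
  calc wordLength S (g ^ i)
      = wordLength S ((g ^ n) ^ (i / n) * g ^ (i % n)) := by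
        rw [← pow_mul, ← pow_add, Nat.div_add_mod]
    _ ≤ i / n * wordLength S (g ^ n) + i % n * wordLength S g :=
        (wordLength_mul_le hS _ _).trans
          (Nat.add_le_add (wordLength_pow_le hS _ _) (wordLength_pow_le hS _ _))
    _ ≤ q * wordLength S (g ^ n) + n * wordLength S g := by
        gcongr
        · exact Nat.div_le_of_le_mul (by rwa [Nat.mul_comm])
        · exact (Nat.mod_lt i hn).le

end WordLength

section GroupOfFractions

variable {M G : Type*} [Monoid M] [Group G]

def LeftLE (ι : M →* G) (x y : G) : Prop := ∃ m : M, y = x * ι m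

variable {ι : M →* G}

local notation:50 x:51 " ≼ " y:51 => LeftLE ι x y

theorem LeftLE.refl (x : G) : x ≼ x := ⟨1, by rw [map_one, mul_one]⟩

theorem LeftLE.trans {x y z : G} (hxy : x ≼ y) (hyz : y ≼ z) : x ≼ z := by
  obtain ⟨m, rfl⟩ := hxy
  obtain ⟨m', rfl⟩ := hyz
  exact ⟨m * m', by rw [map_mul, mul_assoc]⟩

theorem leftLE_mul_left_iff (g : G) {x y : G} : g * x ≼ g * y ↔ x ≼ y := by
  simp only [LeftLE, mul_assoc, mul_right_inj]

theorem map_leftLE_map_iff (hinj : Function.Injective ι) {a b : M} :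
    ι a ≼ ι b ↔ LDvd a b := by
  simp only [LeftLE, LDvd, ← map_mul, hinj.eq_iff]

variable {Δ : M}

theorem LeftLE.antisymm (hG : IsGarside M Δ) (hfrac : IsGroupOfFractions M G ι) {x y : G}
    (hxy : x ≼ y) (hyx : y ≼ x) : x = y := by
  obtain ⟨m, rfl⟩ := hxy
  obtain ⟨m', hm'⟩ := hyx
  rw [mul_assoc, left_eq_mul, ← map_mul] at hm'
  have hmm' : m * m' = 1 := hfrac.injective (by rw [hm', map_one])
  rw [hG.eq_one_of_mul_eq_one hmm', map_one, mul_one]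

theorem pow_leftLE_mul_pow (hG : IsGarside M Δ) (m : M) (K : ℕ) :
    ι (Δ ^ K) ≼ ι m * ι (Δ ^ K) := by
  obtain ⟨m', hm'⟩ := hG.exists_mul_delta_pow_eq m K
  exact ⟨m', by rw [← map_mul, hm', map_mul]⟩

theorem mul_pow_leftLE_mul_pow_iff (hG : IsGarside M Δ) (K : ℕ) {x y : G} :
    x * ι (Δ ^ K) ≼ y * ι (Δ ^ K) ↔ x ≼ y := by
  constructor
  · rintro ⟨m, hm⟩
    obtain ⟨m', hm'⟩ := hG.exists_delta_pow_mul_eq m K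
    refine ⟨m', mul_right_cancel (b := ι (Δ ^ K)) ?_⟩
    rw [hm, mul_assoc, mul_assoc, ← map_mul, ← map_mul, hm']
  · rintro ⟨m, rfl⟩
    obtain ⟨m', hm'⟩ := hG.exists_mul_delta_pow_eq m K
    exact ⟨m', by rw [mul_assoc, mul_assoc, ← map_mul, ← map_mul, hm']⟩

theorem exists_mul_pow_eq_map (hG : IsGarside M Δ) (hfrac : IsGroupOfFractions M G ι) (x : G) :
    ∃ (u : M) (K : ℕ), x * ι (Δ ^ K) = ι u := by
  obtain ⟨a, b, rfl⟩ := hfrac.fraction x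
  obtain ⟨c, hc⟩ := hG.ldvd_pow_norm b
  exact ⟨a * c, norm b, by rw [hc, map_mul, map_mul, mul_assoc, inv_mul_cancel_left]⟩

theorem exists_pow_mul_eq_map (hG : IsGarside M Δ) (hfrac : IsGroupOfFractions M G ι) (x : G) :
    ∃ (u : M) (K : ℕ), ι (Δ ^ K) * x = ι u := by
  obtain ⟨u, K, hu⟩ := exists_mul_pow_eq_map hG hfrac x
  obtain ⟨u', hu'⟩ := hG.exists_delta_pow_mul_eq u K
  refine ⟨u', K, mul_right_cancel (b := ι (Δ ^ K)) ?_⟩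
  rw [mul_assoc, hu, ← map_mul, hu', map_mul]

theorem exists_forall_leftLE_map_mul (hG : IsGarside M Δ) (hfrac : IsGroupOfFractions M G ι)
    (a : G) : ∃ A : G, ∀ m : M, A ≼ ι m * a := by
  obtain ⟨u, K, hu⟩ := exists_pow_mul_eq_map hG hfrac a
  refine ⟨(ι (Δ ^ K))⁻¹, fun m => ?_⟩
  obtain ⟨m', hm'⟩ := hG.exists_delta_pow_mul_eq m K
  refine ⟨m' * u, ?_⟩
  rw [map_mul, ← hu, ← mul_assoc (ι m'), ← map_mul, ← hm', map_mul, mul_assoc, inv_mul_cancel_left]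

theorem exists_sup_one (hG : IsGarside M Δ) (hfrac : IsGroupOfFractions M G ι) (x : G) :
    ∃ j : G, 1 ≼ j ∧ x ≼ j ∧ ∀ z, 1 ≼ z → x ≼ z → j ≼ z := by
  obtain ⟨u, K, hu⟩ := exists_mul_pow_eq_map hG hfrac x
  obtain ⟨L, huL, hΔL, hL⟩ := hG.exists_llcm u (Δ ^ K)
  have hinj := hfrac.injective
  refine ⟨ι L * (ι (Δ ^ K))⁻¹, ?_, ?_, fun z hz hxz => ?_⟩
  · rwa [← mul_pow_leftLE_mul_pow_iff hG K, one_mul, inv_mul_cancel_right,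
      map_leftLE_map_iff hinj]
  · rwa [← mul_pow_leftLE_mul_pow_iff hG K, hu, inv_mul_cancel_right, map_leftLE_map_iff hinj]
  · obtain ⟨w, rfl⟩ := hz
    rw [← mul_pow_leftLE_mul_pow_iff hG K, hu, one_mul, ← map_mul,
      map_leftLE_map_iff hinj] at hxz
    rw [← mul_pow_leftLE_mul_pow_iff hG K, inv_mul_cancel_right, one_mul, ← map_mul,
      map_leftLE_map_iff hinj]
    refine hL _ hxz ((map_leftLE_map_iff hinj).mp ?_)
    rw [map_mul]
    exact pow_leftLE_mul_pow hG w K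

theorem finite_setOf_leftLE_leftLE (hG : IsGarside M Δ) (hfrac : IsGroupOfFractions M G ι)
    (A Z : G) : {x : G | A ≼ x ∧ x ≼ Z}.Finite := by
  rcases Set.eq_empty_or_nonempty {x : G | A ≼ x ∧ x ≼ Z} with hempty | ⟨x₀, hA₀, hZ₀⟩
  · rw [hempty]
    exact Set.finite_empty
  obtain ⟨w, hw⟩ := hA₀.trans hZ₀
  refine ((hG.finite_setOf_ldvd w).image fun v => A * ι v).subset ?_
  rintro _ ⟨⟨v, rfl⟩, v', hv'⟩
  refine ⟨v, ⟨v', hfrac.injective ?_⟩, rfl⟩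
  rw [map_mul, ← mul_right_inj A, ← hw, hv', mul_assoc]

theorem closure_image_simpleDivs (hG : IsGarside M Δ) (hfrac : IsGroupOfFractions M G ι) :
    Subgroup.closure (ι '' SimpleDivs Δ) = ⊤ := by
  have hmap : ∀ a : M, ι a ∈ Subgroup.closure (ι '' SimpleDivs Δ) := by
    intro a
    have ha : ι a ∈ (Submonoid.closure (SimpleDivs Δ)).map ι :=
      ⟨a, hG.generates ▸ Submonoid.mem_top a, rfl⟩
    rw [MonoidHom.map_mclosure] at ha
    exact Submonoid.closure_le.mpr Subgroup.subset_closure ha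
  refine eq_top_iff.mpr fun g _ => ?_
  obtain ⟨a, b, rfl⟩ := hfrac.fraction g
  exact mul_mem (hmap a) (inv_mem (hmap b))

theorem mul_pow_leftLE_pow_succ (hG : IsGarside M Δ) {x : G}
    (hx : x ∈ ι '' SimpleDivs Δ ∨ x⁻¹ ∈ ι '' SimpleDivs Δ) (L : ℕ) :
    x * ι (Δ ^ L) ≼ ι (Δ ^ (L + 1)) := by
  have hxΔ : ∃ t : M, x⁻¹ * ι Δ = ι t := by
    rcases hx with ⟨s, ⟨t, ht⟩, rfl⟩ | ⟨s, -, hs⟩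
    · exact ⟨t, by rw [ht, map_mul, inv_mul_cancel_left]⟩
    · exact ⟨s * Δ, by rw [← hs, map_mul]⟩
  obtain ⟨t, ht⟩ := hxΔ
  rw [← leftLE_mul_left_iff x⁻¹, inv_mul_cancel_left, pow_succ', map_mul, ← mul_assoc, ht]
  exact pow_leftLE_mul_pow hG t L

theorem leftLE_pow_wordLength (hG : IsGarside M Δ) (hfrac : IsGroupOfFractions M G ι) (g : G) :
    g ≼ ι (Δ ^ wordLength (ι '' SimpleDivs Δ) g) := by
  obtain ⟨l, hl, rfl, hlen⟩ :=
    exists_word_length_eq_wordLength (closure_image_simpleDivs hG hfrac) g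
  rw [← hlen]
  clear hlen
  induction l with
  | nil =>
    rw [List.prod_nil, List.length_nil, pow_zero, map_one]
    exact LeftLE.refl 1
  | cons x t ih =>
    simp only [List.mem_cons, forall_eq_or_imp] at hl
    rw [List.prod_cons, List.length_cons]
    exact ((leftLE_mul_left_iff x).mpr (ih hl.2)).trans (mul_pow_leftLE_pow_succ hG hl.1 _)

theorem exists_map_eq_le_norm_of_chain (hG : IsGarside M Δ) {f : ℕ → G} (h0 : f 0 = 1)
    (hle : ∀ k, f k ≼ f (k + 1)) (hne : ∀ k, f (k + 1) ≠ f k) (k : ℕ) :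
    ∃ m : M, f k = ι m ∧ k ≤ norm m := by
  induction k with
  | zero => exact ⟨1, by rw [h0, map_one], Nat.zero_le _⟩
  | succ k ih =>
    obtain ⟨m, hm, hk⟩ := ih
    obtain ⟨d, hd⟩ := hle k
    have hd1 : d ≠ 1 := fun hd1 => hne k (by rw [hd, hd1, map_one, mul_one])
    refine ⟨m * d, by rw [hd, hm, map_mul], ?_⟩
    have := hG.norm_add_norm_le m d
    have := hG.norm_pos hd1
    omega

section PowSup

variable (hG : IsGarside M Δ) (hfrac : IsGroupOfFractions M G ι)

noncomputable def supOne (x : G) : G := (exists_sup_one hG hfrac x).choose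

theorem one_leftLE_supOne (x : G) : 1 ≼ supOne hG hfrac x :=
  (exists_sup_one hG hfrac x).choose_spec.1

theorem leftLE_supOne (x : G) : x ≼ supOne hG hfrac x :=
  (exists_sup_one hG hfrac x).choose_spec.2.1

theorem supOne_leftLE {x z : G} (h1 : 1 ≼ z) (hx : x ≼ z) : supOne hG hfrac x ≼ z :=
  (exists_sup_one hG hfrac x).choose_spec.2.2 z h1 hx

/-- The join `1 ∨ g ∨ ⋯ ∨ g ^ n`, built from joins with `1` only:
`1 ∨ g ∨ ⋯ ∨ g ^ (n + 1) = 1 ∨ g * (1 ∨ g ∨ ⋯ ∨ g ^ n)` by left invariance. -/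
noncomputable def powSup (g : G) : ℕ → G
  | 0 => 1
  | n + 1 => supOne hG hfrac (g * powSup g n)

variable {hG hfrac} {g : G}

theorem pow_leftLE_powSup {i n : ℕ} (h : i ≤ n) : g ^ i ≼ powSup hG hfrac g n := by
  induction n generalizing i with
  | zero =>
    rw [Nat.le_zero.mp h, pow_zero]
    exact LeftLE.refl 1
  | succ n ih =>
    rcases i with _ | i
    · rw [pow_zero]
      exact one_leftLE_supOne hG hfrac _
    · rw [pow_succ']
      exact ((leftLE_mul_left_iff g).mpr (ih (by omega))).trans (leftLE_supOne hG hfrac _)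

theorem powSup_leftLE {n : ℕ} {z : G} (h : ∀ i ≤ n, g ^ i ≼ z) : powSup hG hfrac g n ≼ z := by
  induction n generalizing z with
  | zero =>
    have h0 := h 0 le_rfl
    rwa [pow_zero] at h0
  | succ n ih =>
    refine supOne_leftLE hG hfrac (pow_zero g ▸ h 0 (Nat.zero_le _)) ?_
    rw [← leftLE_mul_left_iff g⁻¹, inv_mul_cancel_left]
    refine ih fun i hi => ?_
    rw [← leftLE_mul_left_iff g, mul_inv_cancel_left, ← pow_succ']
    exact h (i + 1) (by omega)

theorem powSup_leftLE_succ (n : ℕ) : powSup hG hfrac g n ≼ powSup hG hfrac g (n + 1) :=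
  powSup_leftLE fun _ hi => pow_leftLE_powSup (hi.trans n.le_succ)

theorem pow_leftLE_of_powSup_succ_eq {n : ℕ}
    (h : powSup hG hfrac g (n + 1) = powSup hG hfrac g n) (m : ℕ) :
    g ^ m ≼ powSup hG hfrac g n := by
  have hstab : ∀ k, n ≤ k → powSup hG hfrac g k = powSup hG hfrac g n := by
    intro k hk
    induction k, hk using Nat.le_induction with
    | base => rfl
    | succ k _ ih => rw [powSup, ih, ← powSup, h]
  rcases le_total m n with hmn | hnm
  · exact pow_leftLE_powSup hmn
  · exact hstab m hnm ▸ pow_leftLE_powSup le_rfl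

end PowSup

theorem exists_powSup_succ_eq (hG : IsGarside M Δ) (hfrac : IsGroupOfFractions M G ι) {g : G}
    {n s : ℕ} (hlt : norm (Δ ^ s) < n)
    (hpow : ∀ i ≤ n, g ^ i ≼ ι (Δ ^ s)) :
    ∃ k, powSup hG hfrac g (k + 1) = powSup hG hfrac g k := by
  by_contra! hne
  obtain ⟨m, hm, hnm⟩ := exists_map_eq_le_norm_of_chain hG rfl powSup_leftLE_succ hne n
  have hdvd : LDvd m (Δ ^ s) := (map_leftLE_map_iff hfrac.injective).mp (hm ▸ powSup_leftLE hpow)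
  have := hG.norm_le_norm_of_ldvd hdvd
  omega

theorem eq_one_of_isOfFinOrder (hG : IsGarside M Δ) (hfrac : IsGroupOfFractions M G ι) {g : G}
    (hg : IsOfFinOrder g) : g = 1 := by
  obtain ⟨k, hk, hgk⟩ := isOfFinOrder_iff_pow_eq_one.mp hg
  obtain ⟨n, rfl⟩ : ∃ n, k = n + 1 := ⟨k - 1, by omega⟩
  set J := powSup hG hfrac g n
  have hJ : powSup hG hfrac g (n + 1) = J := by
    refine LeftLE.antisymm hG hfrac (powSup_leftLE fun i hi => ?_) (powSup_leftLE_succ n)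
    rcases (Nat.lt_or_eq_of_le hi) with hin | rfl
    · exact pow_leftLE_powSup (by omega)
    · rw [hgk]
      exact pow_zero g ▸ pow_leftLE_powSup (Nat.zero_le n)
  have hgJ : g * J ≼ J := by
    have h := leftLE_supOne hG hfrac (g * J)
    change g * J ≼ powSup hG hfrac g (n + 1) at h
    rwa [hJ] at h
  have hpowJ : ∀ j : ℕ, g ^ j * J ≼ J := by
    intro j
    induction j with
    | zero =>
      rw [pow_zero, one_mul]
      exact LeftLE.refl J
    | succ j ih =>
      rw [pow_succ', mul_assoc]
      exact ((leftLE_mul_left_iff g).mpr ih).trans hgJ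
  have hinv : g ^ n = g⁻¹ := eq_inv_of_mul_eq_one_left (by rw [← pow_succ, hgk])
  have hJg : J ≼ g * J := by
    rw [← leftLE_mul_left_iff g⁻¹, inv_mul_cancel_left, ← hinv]
    exact hpowJ n
  exact mul_eq_right.mp (LeftLE.antisymm hG hfrac hgJ hJg)

theorem exists_forall_pow_leftLE (hG : IsGarside M Δ) (hfrac : IsGroupOfFractions M G ι) {c : ℕ}
    (hc : ∀ n, norm (Δ ^ n) ≤ c * n) {g : G} {n : ℕ}
    (h : 2 * c * wordLength (ι '' SimpleDivs Δ) (g ^ n) < n) : ∃ Z : G, ∀ m, g ^ m ≼ Z := by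
  set ℓ := wordLength (ι '' SimpleDivs Δ) (g ^ n)
  set B := n * wordLength (ι '' SimpleDivs Δ) g
  set q := c * B + 1
  have hlt : norm (Δ ^ (q * ℓ + B)) < q * n :=
    calc norm (Δ ^ (q * ℓ + B)) ≤ c * (q * ℓ + B) := hc _
      _ < q * n := by
        have hqn := Nat.mul_le_mul_left q (Nat.succ_le_of_lt h)
        have hq : q = c * B + 1 := rfl
        nlinarith [Nat.zero_le (c * q * ℓ)]
  have hpow : ∀ i ≤ q * n, g ^ i ≼ ι (Δ ^ (q * ℓ + B)) := fun i hi =>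
    (leftLE_pow_wordLength hG hfrac _).trans <| (map_leftLE_map_iff hfrac.injective).mpr <|
      ldvd_pow_of_le Δ (wordLength_pow_le_of_le_mul (closure_image_simpleDivs hG hfrac) g hi)
  obtain ⟨k, hk⟩ := exists_powSup_succ_eq hG hfrac hlt hpow
  exact ⟨_, pow_leftLE_of_powSup_succ_eq hk⟩

theorem exists_forall_leftLE_pow (hG : IsGarside M Δ) (hfrac : IsGroupOfFractions M G ι) {c : ℕ}
    (hc : ∀ n, norm (Δ ^ n) ≤ c * n) {g : G} {n : ℕ}
    (h : 2 * c * wordLength (ι '' SimpleDivs Δ) (g ^ n) < n) : ∃ A : G, ∀ m, A ≼ g ^ m := by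
  have hinv : 2 * c * wordLength (ι '' SimpleDivs Δ) (g⁻¹ ^ n) < n := by
    rw [inv_pow]
    refine lt_of_le_of_lt ?_ h
    gcongr
    exact wordLength_inv_le (closure_image_simpleDivs hG hfrac) _
  obtain ⟨Z, hZ⟩ := exists_forall_pow_leftLE hG hfrac hc hinv
  obtain ⟨A, hA⟩ := exists_forall_leftLE_map_mul hG hfrac Z⁻¹
  refine ⟨A, fun m => ?_⟩
  obtain ⟨p, hp⟩ := hZ m
  have hAp := hA p
  rwa [hp, mul_inv_rev, mul_inv_cancel_left, inv_pow, inv_inv] at hAp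

theorem eq_one_of_two_mul_wordLength_lt (hG : IsGarside M Δ) (hfrac : IsGroupOfFractions M G ι)
    {c : ℕ} (hc : ∀ n, norm (Δ ^ n) ≤ c * n) {g : G} {n : ℕ}
    (h : 2 * c * wordLength (ι '' SimpleDivs Δ) (g ^ n) < n) : g = 1 := by
  obtain ⟨A, hA⟩ := exists_forall_leftLE_pow hG hfrac hc h
  obtain ⟨Z, hZ⟩ := exists_forall_pow_leftLE hG hfrac hc h
  refine eq_one_of_isOfFinOrder hG hfrac (finite_powers.mp ?_)
  refine (finite_setOf_leftLE_leftLE hG hfrac A Z).subset ?_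
  rintro _ ⟨m, rfl⟩
  exact ⟨hA m, hZ m⟩

end GroupOfFractions

theorem le_liminf_div_of_le {u : ℕ → ℕ} {ε : ℝ} (C : ℕ) (hle : ∀ n, u n ≤ n * C)
    (hge : ∀ n, 0 < n → ε * n ≤ u n) :
    ε ≤ Filter.liminf (fun n : ℕ => (u n : ℝ) / n) Filter.atTop := by
  have hbdd : Filter.IsBoundedUnder (· ≤ ·) Filter.atTop fun n : ℕ => (u n : ℝ) / n := by
    refine Filter.isBoundedUnder_of ⟨C, fun n => div_le_of_le_mul₀ n.cast_nonneg C.cast_nonneg ?_⟩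
    exact_mod_cast (hle n).trans_eq (Nat.mul_comm n C)
  refine Filter.le_liminf_of_le hbdd.isCoboundedUnder_ge ?_
  filter_upwards [Filter.eventually_gt_atTop 0] with n hn
  exact (le_div_iff₀ (Nat.cast_pos.mpr hn)).mpr (hge n hn)

end Garside

open Garside in
/-- if `Δ` is tame, the translation lengths of nontrivial elements of `G`
are bounded away from zero: there is `ε > 0` with `liminf_n |gⁿ|_D/n ≥ ε` for all `g ≠ 1`. -/
theorem garside_tame_translation_length_bounded_below
    {M G : Type*} [Monoid M] [Group G] (ι : M →* G) (Δ : M)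
    (hG : IsGarside M Δ) (hfrac : IsGroupOfFractions M G ι)
    (htame : ∃ c : ℝ, ∀ n : ℕ, (norm (Δ ^ n) : ℝ) ≤ c * n) :
    ∃ ε : ℝ, 0 < ε ∧ ∀ g : G, g ≠ 1 →
      ε ≤ Filter.liminf
        (fun n : ℕ => (wordLength (ι '' SimpleDivs Δ) (g ^ n) : ℝ) / n) Filter.atTop := by
  obtain ⟨c, hc⟩ := htame
  set C := ⌈c⌉₊ + 1
  have hC : ∀ n, norm (Δ ^ n) ≤ C * n := fun n => by
    have hcC : c ≤ C := by push_cast [C]; linarith [Nat.le_ceil c]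
    exact_mod_cast (hc n).trans (mul_le_mul_of_nonneg_right hcC n.cast_nonneg)
  refine ⟨1 / (2 * C), by positivity, fun g hg => ?_⟩
  refine le_liminf_div_of_le _ (wordLength_pow_le (closure_image_simpleDivs hG hfrac) g)
    fun n _ => ?_
  have hn : n ≤ 2 * C * wordLength (ι '' SimpleDivs Δ) (g ^ n) :=
    not_lt.mp fun h => hg (eq_one_of_two_mul_wordLength_lt hG hfrac hC h)
  rw [div_mul_eq_mul_div, one_mul, div_le_iff₀ (by positivity)]
  exact_mod_cast hn.trans_eq (Nat.mul_comm _ _)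
end

section
/- Let M be a Garside monoid with Garside element Δ, let G be its group of fractions, and let m be the least positive integer such that Δ^m is central in G. Then the kernel of the action of G by left multiplication on the coset space G/⟨Δ⟩ is exactly ⟨Δ^m⟩; that is, {g ∈ G : h⁻¹·g·h ∈ ⟨Δ⟩ for all h ∈ G} = ⟨Δ^m⟩. -/
namespace Garside

variable {M : Type*} [Monoid M]

theorem eq_one_of_zero_mem_exprLengths {x : M} (h : 0 ∈ exprLengths x) : x = 1 := by
  obtain ⟨l, -, hprod, hlen⟩ := h
  rw [← hprod, List.length_eq_zero_iff.mp hlen, List.prod_nil]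

theorem add_mem_exprLengths_mul {x y : M} {a b : ℕ} (ha : a ∈ exprLengths x)
    (hb : b ∈ exprLengths y) : a + b ∈ exprLengths (x * y) := by
  obtain ⟨l, hl, rfl, rfl⟩ := ha
  obtain ⟨l', hl', rfl, rfl⟩ := hb
  refine ⟨l ++ l', ?_, List.prod_append, List.length_append⟩
  simpa only [List.mem_append, or_imp, forall_and] using ⟨hl, hl'⟩

theorem mul_mem_exprLengths_pow {x : M} {a : ℕ} (ha : a ∈ exprLengths x) (n : ℕ) :
    n * a ∈ exprLengths (x ^ n) := by
  induction n with
  | zero => exact ⟨[], by simp, by simp, by simp⟩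
  | succ n ih => simpa only [pow_succ, Nat.succ_mul] using add_mem_exprLengths_mul ih ha

/-- If `x ^ t = 1` with `t > 0` and `x` has an atom expression of length `L > 0`, then
`1 = x ^ (t * s)` has atom expressions of every length `t * s * L`. -/
theorem not_isOfFinOrder_of_ne_one {x : M} (hx : (exprLengths x).Nonempty)
    (hbdd : BddAbove (exprLengths (1 : M))) (hx1 : x ≠ 1) : ¬IsOfFinOrder x := by
  intro hfin
  obtain ⟨t, ht, hxt⟩ := isOfFinOrder_iff_pow_eq_one.mp hfin
  obtain ⟨L, hL⟩ := hx
  have hL0 : L ≠ 0 := by rintro rfl; exact hx1 (eq_one_of_zero_mem_exprLengths hL)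
  obtain ⟨B, hB⟩ := hbdd
  have hmem : t * (B + 1) * L ∈ exprLengths (1 : M) := by
    simpa only [pow_mul, hxt, one_pow] using mul_mem_exprLengths_pow hL (t * (B + 1))
  have hlarge : B + 1 ≤ t * (B + 1) * L :=
    calc B + 1 ≤ t * (B + 1) := Nat.le_mul_of_pos_left _ ht
      _ ≤ t * (B + 1) * L := Nat.le_mul_of_pos_right _ (Nat.pos_of_ne_zero hL0)
  have := hB hmem
  omega

end Garside

namespace Subgroup

variable {G : Type*} [Group G]

theorem coe_normalCore (H : Subgroup G) :
    (H.normalCore : Set G) = {g | ∀ h : G, h⁻¹ * g * h ∈ H} := by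
  ext g
  exact ⟨fun hg h => by simpa using hg h⁻¹, fun hg h => by simpa using hg h⁻¹⟩

theorem mem_normalCore_of_mem_center {H : Subgroup G} {g : G} (hH : g ∈ H)
    (hc : g ∈ center G) : g ∈ H.normalCore := fun b => by
  rwa [mem_center_iff.mp hc b, mul_inv_cancel_right]

variable {δ : G}

theorem zpow_mem_center_iff_dvd {m : ℕ} (hm : 0 < m) (hcentral : δ ^ m ∈ center G)
    (hleast : ∀ k : ℕ, 0 < k → δ ^ k ∈ center G → m ≤ k) (k : ℤ) :
    δ ^ k ∈ center G ↔ (m : ℤ) ∣ k := by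
  refine ⟨fun hk => ?_, ?_⟩
  · have hm0 : (m : ℤ) ≠ 0 := by exact_mod_cast hm.ne'
    obtain ⟨r, hr⟩ := Int.eq_ofNat_of_zero_le (Int.emod_nonneg k hm0)
    have hrem : δ ^ r ∈ center G := by
      rw [← zpow_natCast, ← hr, Int.emod_def, zpow_sub, zpow_mul, zpow_natCast]
      exact mul_mem hk (inv_mem (zpow_mem hcentral _))
    have hrm : r < m := by have := Int.emod_lt_of_pos k (Int.natCast_pos.mpr hm); omega
    obtain rfl : r = 0 := by
      by_contra hr0
      exact absurd hrm (not_lt.mpr (hleast r (Nat.pos_of_ne_zero hr0) hrem))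
    exact Int.dvd_of_emod_eq_zero hr
  · rintro ⟨t, rfl⟩
    rw [zpow_mul, zpow_natCast]
    exact zpow_mem hcentral t

/-- Conjugation fixes the central element `δ ^ (k * n)`, so it maps `δ ^ k` to an `n`-th root
of `δ ^ (k * n)` inside `⟨δ⟩`, which for `δ` of infinite order can only be `δ ^ k` itself. -/
theorem eq_of_conj_zpow_eq_zpow {n : ℤ} (hδ : ¬IsOfFinOrder δ) (hn : n ≠ 0) (hc : δ ^ n ∈ center G)
    {x : G} {j k : ℤ} (hjk : x * δ ^ k * x⁻¹ = δ ^ j) : j = k := by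
  have hcentral : δ ^ (k * n) ∈ center G := by
    rw [mul_comm, zpow_mul]; exact zpow_mem hc k
  have : δ ^ (j * n) = δ ^ (k * n) :=
    calc δ ^ (j * n) = (x * δ ^ k * x⁻¹) ^ n := by rw [hjk, zpow_mul]
      _ = x * δ ^ (k * n) * x⁻¹ := by rw [conj_zpow, zpow_mul]
      _ = δ ^ (k * n) := by rw [mem_center_iff.mp hcentral x, mul_inv_cancel_right]
  exact mul_right_cancel₀ hn (injective_zpow_iff_not_isOfFinOrder.mpr hδ this)

theorem normalCore_zpowers_le_center {n : ℤ} (hδ : ¬IsOfFinOrder δ) (hn : n ≠ 0)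
    (hc : δ ^ n ∈ center G) : (zpowers δ).normalCore ≤ center G := by
  intro g hg
  obtain ⟨k, rfl⟩ := mem_zpowers_iff.mp (normalCore_le _ hg)
  refine mem_center_iff.mpr fun x => ?_
  obtain ⟨j, hj⟩ := mem_zpowers_iff.mp (hg x)
  obtain rfl := eq_of_conj_zpow_eq_zpow hδ hn hc hj.symm
  exact (eq_mul_inv_iff_mul_eq.mp hj).symm

theorem normalCore_zpowers_eq {m : ℕ} (hδ : ¬IsOfFinOrder δ) (hm : 0 < m)
    (hcentral : δ ^ m ∈ center G) (hleast : ∀ k : ℕ, 0 < k → δ ^ k ∈ center G → m ≤ k) :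
    (zpowers δ).normalCore = zpowers (δ ^ m) := by
  apply le_antisymm
  · intro g hg
    obtain ⟨k, rfl⟩ := mem_zpowers_iff.mp (normalCore_le _ hg)
    have hc := normalCore_zpowers_le_center hδ (n := m) (by exact_mod_cast hm.ne')
      (by rwa [zpow_natCast]) hg
    obtain ⟨t, rfl⟩ := (zpow_mem_center_iff_dvd hm hcentral hleast k).mp hc
    exact ⟨t, by rw [zpow_mul, zpow_natCast]⟩
  · rw [zpowers_le]
    exact mem_normalCore_of_mem_center (npow_mem_zpowers δ m) hcentral

end Subgroup

open Garside in
/-- with `m` the least positive integer such that `Δ^m` is central in `G`,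
the kernel of the left-multiplication action of `G` on `G/⟨Δ⟩` is exactly `⟨Δ^m⟩`. -/
theorem garside_kernel_of_coset_action
    {M G : Type*} [Monoid M] [Group G] (ι : M →* G) (Δ : M)
    (hG : IsGarside M Δ) (hfrac : IsGroupOfFractions M G ι)
    (m : ℕ) (hm : 0 < m) (hcentral : ∀ g : G, g * (ι Δ) ^ m = (ι Δ) ^ m * g)
    (hleast : ∀ k : ℕ, 0 < k → (∀ g : G, g * (ι Δ) ^ k = (ι Δ) ^ k * g) → m ≤ k) :
    {g : G | ∀ h : G, h⁻¹ * g * h ∈ Subgroup.zpowers (ι Δ)} =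
      ↑(Subgroup.zpowers ((ι Δ) ^ m)) := by
  rcases eq_or_ne Δ 1 with rfl | hΔ
  · ext g
    simp [mul_assoc, inv_mul_eq_one]
  have hδ : ¬IsOfFinOrder (ι Δ) := hfrac.injective.isOfFinOrder_iff.not.mpr
    (not_isOfFinOrder_of_ne_one (hG.expr_nonempty Δ) (hG.expr_bdd 1) hΔ)
  have hcentral' : ι Δ ^ m ∈ Subgroup.center G := Subgroup.mem_center_iff.mpr hcentral
  rw [← Subgroup.coe_normalCore, Subgroup.normalCore_zpowers_eq hδ hm hcentral'
    fun k hk hc => hleast k hk (Subgroup.mem_center_iff.mp hc)]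
end
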